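/- arXiv:2504.15810 — 2 statements merged into one kernel-verified Lean document; each statement's English description precedes it below -/
import Mathlib

section
/- For every natural number $m$, $\sum_{\ell=0}^{m} \binom{m}{\ell}\, (\ell+2)!\, (m-\ell+2)! = \frac{(m+5)!}{30}$. -/
/-!
Since `C(m, ℓ) ℓ! (m - ℓ)! = m!` and `(ℓ + a)! = C(ℓ + a, a) ℓ! a!`, each summand is
`m! a! b! C(ℓ + a, a) C(m - ℓ + b, b)`. The convolution of the coefficient sequences of
`(1 - X)^-(a+1)` and `(1 - X)^-(b+1)` is that of `(1 - X)^-(a+b+2)`, so the sum of the binomial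
products is `C(m + a + b + 1, a + b + 1)`. With `a = b = 2` this gives
`4 m! C(m + 5, 5) = (m + 5)! / 30`.
-/

open Nat Finset PowerSeries

theorem Nat.sum_antidiagonal_add_choose_mul_add_choose (a b n : ℕ) :
    ∑ ij ∈ antidiagonal n, (a + ij.1).choose a * (b + ij.2).choose b
      = (a + b + 1 + n).choose (a + b + 1) := by
  have h := congrArg (coeff n) (pow_add (mk 1 : PowerSeries ℤ) (a + 1) (b + 1))
  rw [show a + 1 + (b + 1) = a + b + 1 + 1 by ring, mk_one_pow_eq_mk_choose_add,
    mk_one_pow_eq_mk_choose_add, mk_one_pow_eq_mk_choose_add, coeff_mul] at h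
  simp only [coeff_mk] at h
  exact_mod_cast h.symm

theorem Nat.choose_mul_add_factorial_mul_add_factorial {m l : ℕ} (hl : l ≤ m) (a b : ℕ) :
    m.choose l * (l + a)! * (m - l + b)!
      = m ! * a ! * b ! * ((a + l).choose a * (b + (m - l)).choose b) := by
  rw [← choose_mul_factorial_mul_factorial hl, ← add_choose_mul_factorial_mul_factorial l a,
    ← add_choose_mul_factorial_mul_factorial (m - l) b, add_comm a l, add_comm b (m - l)]
  ring

theorem Nat.sum_range_choose_mul_add_factorial_mul_add_factorial (m a b : ℕ) :
    (a + b + 1)! * ∑ l ∈ range (m + 1), m.choose l * (l + a)! * (m - l + b)!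
      = a ! * b ! * (m + a + b + 1)! := by
  rw [sum_congr rfl fun l hl => choose_mul_add_factorial_mul_add_factorial
      (mem_range_succ_iff.mp hl) a b, ← mul_sum,
    ← Nat.sum_antidiagonal_eq_sum_range_succ (fun i j => (a + i).choose a * (b + j).choose b),
    sum_antidiagonal_add_choose_mul_add_choose, show m + a + b + 1 = m + (a + b + 1) by ring,
    ← add_choose_mul_factorial_mul_factorial m (a + b + 1), add_comm m]
  ring

/-- `∑_{ℓ=0}^m C(m,ℓ) (ℓ+2)! (m-ℓ+2)! = (m+5)!/30`. -/
theorem sum_choose_factorial_add_two (m : ℕ) :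
    ∑ ℓ ∈ Finset.range (m + 1), ((m.choose ℓ : ℚ) * (ℓ + 2)! * (m - ℓ + 2)!)
      = ((m + 5)! : ℚ) / 30 := by
  have h := sum_range_choose_mul_add_factorial_mul_add_factorial m 2 2
  rw [show (2 + 2 + 1)! = 4 * 30 from rfl, show m + 2 + 2 + 1 = m + 5 from rfl] at h
  rw [eq_div_iff (by norm_num)]
  exact_mod_cast (by simp only [factorial_two] at h; omega)
end

section
/- Let $c>0$, $b \ge 0$, and let $(A_n)_{n\ge 0}$, $(B_n)_{n\ge 0}$ be sequences of nonnegative reals satisfying $A_n \le \sum_{k=1}^{n} \binom{n}{k} c^k b\, A_{n-k} + B_n$ for all $n \ge 0$ (including $n=0$, where the sum is empty). Then for all $n$, $A_n \le \sum_{m=0}^{n} c^{m} \binom{n}{m} B_{n-m} \sum_{\ell=0}^{m} \ell!\, b^{\ell}\, S(m,\ell)$, where $S(m,\ell)$ are Stirling numbers of the second kind. -/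
/-!
Write `F_m(b) = ∑_ℓ ℓ! b^ℓ S(m,ℓ)` for the Fubini polynomials and `f ⋆ g` for the binomial
convolution `(f ⋆ g)_n = ∑_m C(n,m) f_m g_{n-m}`, which is multiplication of exponential generating
functions and hence commutative and associative. The Stirling identity makes `V_m = c^m F_m(b)` the
resolvent of the kernel `G_k = b c^k` (`k ≥ 1`): `V = δ + G ⋆ V`. Hence the right-hand side
`U = V ⋆ B` solves the recursion with equality, `U = B + G ⋆ U`, and as the weights are nonnegative,
strong induction gives `A ≤ U`.
-/

/-- Stirling numbers of the second kind. -/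
def stirling2 : ℕ → ℕ → ℕ
  | 0, 0 => 1
  | 0, _ + 1 => 0
  | _ + 1, 0 => 0
  | n + 1, k + 1 => (k + 1) * stirling2 n (k + 1) + stirling2 n k

open Finset Nat PowerSeries

theorem stirling2_eq_stirlingSecond : stirling2 = Nat.stirlingSecond := by
  funext n k
  induction n generalizing k with
  | zero => cases k <;> rfl
  | succ n ih => cases k <;> simp [stirling2, stirlingSecond_succ_succ, ih]

theorem Nat.stirlingSecond_succ_succ_eq_sum (m ℓ : ℕ) :
    stirlingSecond (m + 1) (ℓ + 1) = ∑ k ∈ range (m + 1), m.choose k * stirlingSecond k ℓ := by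
  induction m generalizing ℓ with
  | zero => simp [stirlingSecond_succ_succ]
  | succ m ih =>
    have hpascal := sum_choose_succ_mul (R := ℕ) (fun i _ => stirlingSecond i ℓ) m
    simp only [Nat.cast_id] at hpascal
    rw [hpascal, ← ih]
    cases ℓ with
    | zero => simp [stirlingSecond_succ_succ]
    | succ ℓ =>
      have hshift : ∑ k ∈ range (m + 1), m.choose k * stirlingSecond (k + 1) (ℓ + 1) =
          (ℓ + 1) * stirlingSecond (m + 1) (ℓ + 2) + stirlingSecond (m + 1) (ℓ + 1) := by
        rw [ih, ih, mul_sum, ← sum_add_distrib]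
        exact sum_congr rfl fun k _ => by rw [stirlingSecond_succ_succ]; ring
      rw [hshift, stirlingSecond_succ_succ (m + 1) (ℓ + 1)]
      ring

theorem Nat.succ_mul_stirlingSecond_succ_eq_sum (m ℓ : ℕ) :
    (ℓ + 1) * stirlingSecond m (ℓ + 1) = ∑ k ∈ range m, m.choose k * stirlingSecond k ℓ := by
  have h := stirlingSecond_succ_succ_eq_sum m ℓ
  rw [sum_range_succ, choose_self, one_mul, stirlingSecond_succ_succ] at h
  omega

section Fubini

variable {R : Type*} [CommSemiring R]

def fubiniPoly (b : R) (m : ℕ) : R :=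
  ∑ ℓ ∈ range (m + 1), (ℓ ! : R) * b ^ ℓ * stirlingSecond m ℓ

@[simp]
theorem fubiniPoly_zero (b : R) : fubiniPoly b 0 = 1 := by simp [fubiniPoly]

theorem fubiniPoly_eq_sum_range (b : R) {m N : ℕ} (h : m < N) :
    fubiniPoly b m = ∑ ℓ ∈ range N, (ℓ ! : R) * b ^ ℓ * stirlingSecond m ℓ := by
  refine sum_subset (range_subset_range.2 h) fun ℓ _ hℓ => ?_
  rw [stirlingSecond_eq_zero_of_lt (by simpa using hℓ)]
  simp

theorem fubiniPoly_eq_mul_sum (b : R) {m : ℕ} (hm : m ≠ 0) :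
    fubiniPoly b m = b * ∑ i ∈ range m, (m.choose i : R) * fubiniPoly b i := by
  have hterm : ∀ i ∈ range m, (m.choose i : R) * fubiniPoly b i =
      ∑ ℓ ∈ range m, (ℓ ! : R) * b ^ ℓ * (m.choose i * stirlingSecond i ℓ : ℕ) := by
    intro i hi
    rw [fubiniPoly_eq_sum_range b (mem_range.1 hi), mul_sum]
    refine sum_congr rfl fun ℓ _ => ?_
    push_cast
    ring
  rw [sum_congr rfl hterm, sum_comm, mul_sum]
  simp only [← mul_sum, ← Nat.cast_sum, ← succ_mul_stirlingSecond_succ_eq_sum]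
  obtain ⟨m, rfl⟩ := exists_eq_succ_of_ne_zero hm
  rw [fubiniPoly_eq_sum_range b (lt_add_one _), sum_range_succ', stirlingSecond_succ_zero,
    Nat.cast_zero, mul_zero, add_zero, mul_sum]
  refine sum_congr rfl fun ℓ _ => ?_
  push_cast [factorial_succ]
  ring

end Fubini

section BinomialConvolution

variable {K : Type*} [Field K]

def binomConv (f g : ℕ → K) (n : ℕ) : K :=
  ∑ m ∈ range (n + 1), (n.choose m : K) * f m * g (n - m)

def egf (f : ℕ → K) : K⟦X⟧ :=
  PowerSeries.mk fun n => f n / n !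

theorem coeff_egf (f : ℕ → K) (n : ℕ) : coeff n (egf f) = f n / n ! :=
  coeff_mk _ _

theorem egf_injective [CharZero K] : Function.Injective (egf : (ℕ → K) → K⟦X⟧) := by
  intro f g h
  funext n
  have hn := congrArg (coeff n) h
  rw [coeff_egf, coeff_egf] at hn
  exact (div_left_inj' (Nat.cast_ne_zero.2 n.factorial_ne_zero)).1 hn

theorem egf_add (f g : ℕ → K) : egf (f + g) = egf f + egf g := by
  ext n
  simp [coeff_egf, add_div]

theorem egf_single_zero_one : egf (Pi.single 0 1 : ℕ → K) = 1 := by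
  ext n
  rcases eq_or_ne n 0 with rfl | hn <;> simp [coeff_egf, coeff_one, *]

theorem egf_binomConv [CharZero K] (f g : ℕ → K) : egf (binomConv f g) = egf f * egf g := by
  ext n
  rw [coeff_mul, Nat.sum_antidiagonal_eq_sum_range_succ_mk, coeff_egf, binomConv, sum_div]
  refine sum_congr rfl fun m hm => ?_
  rw [coeff_egf, coeff_egf, Nat.cast_choose K (Nat.lt_succ_iff.1 (mem_range.1 hm))]
  have hn : (n ! : K) ≠ 0 := Nat.cast_ne_zero.2 n.factorial_ne_zero
  field_simp

theorem binomConv_comm [CharZero K] (f g : ℕ → K) : binomConv f g = binomConv g f :=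
  egf_injective (by rw [egf_binomConv, egf_binomConv, mul_comm])

theorem binomConv_eq_sum_Icc {f : ℕ → K} (hf : f 0 = 0) (g : ℕ → K) (n : ℕ) :
    binomConv f g n = ∑ k ∈ Icc 1 n, (n.choose k : K) * f k * g (n - k) := by
  rw [binomConv, range_eq_Ico, sum_eq_sum_Ico_succ_bot (Nat.succ_pos n), hf, mul_zero, zero_mul,
    zero_add, zero_add, Nat.succ_eq_add_one, Ico_add_one_right_eq_Icc]

theorem binomConv_eq_add_binomConv_of_resolvent [CharZero K] {G V : ℕ → K}
    (hV : V = Pi.single 0 1 + binomConv G V) (B : ℕ → K) :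
    binomConv V B = B + binomConv G (binomConv V B) := by
  have hegf : egf V = 1 + egf G * egf V := by
    conv_lhs => rw [hV]
    rw [egf_add, egf_single_zero_one, egf_binomConv]
  apply egf_injective
  rw [egf_add, egf_binomConv, egf_binomConv, egf_binomConv]
  nth_rewrite 1 [hegf]
  ring

end BinomialConvolution

theorem pow_mul_fubiniPoly_eq_single_add_binomConv {K : Type*} [Field K] [CharZero K] (b c : K) :
    (fun m => c ^ m * fubiniPoly b m) = Pi.single 0 1 +
      binomConv (fun k => if k = 0 then 0 else b * c ^ k) (fun m => c ^ m * fubiniPoly b m) := by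
  funext n
  rcases eq_or_ne n 0 with rfl | hn
  · simp [binomConv]
  rw [Pi.add_apply, Pi.single_eq_of_ne hn, zero_add, binomConv_comm, binomConv, sum_range_succ,
    if_pos (Nat.sub_self n), mul_zero, add_zero, fubiniPoly_eq_mul_sum b hn, mul_sum, mul_sum]
  refine sum_congr rfl fun i hi => ?_
  have hi : i < n := mem_range.1 hi
  rw [if_neg (by omega), ← pow_mul_pow_sub c hi.le]
  ring

theorem le_of_le_sum_Icc_mul_add {R : Type*} [Semiring R] [PartialOrder R] [IsOrderedRing R]
    {w : ℕ → ℕ → R} (hw : ∀ n k, 0 ≤ w n k) {A U B : ℕ → R}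
    (hA : ∀ n, A n ≤ ∑ k ∈ Icc 1 n, w n k * A (n - k) + B n)
    (hU : ∀ n, ∑ k ∈ Icc 1 n, w n k * U (n - k) + B n ≤ U n) (n : ℕ) : A n ≤ U n := by
  induction n using Nat.strong_induction_on with
  | _ n ih =>
    calc A n ≤ ∑ k ∈ Icc 1 n, w n k * A (n - k) + B n := hA n
      _ ≤ ∑ k ∈ Icc 1 n, w n k * U (n - k) + B n := by
        gcongr with k hk
        · exact hw n k
        · obtain ⟨hk1, hkn⟩ := mem_Icc.1 hk
          exact ih (n - k) (by omega)
      _ ≤ U n := hU n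

theorem recursive_bound_stirling_general (c b : ℝ) (hc : 0 < c) (hb : 0 ≤ b)
    (A B : ℕ → ℝ)
    (hrec : ∀ n : ℕ,
      A n ≤ (∑ k ∈ Finset.Icc 1 n, (n.choose k : ℝ) * c ^ k * b * A (n - k)) + B n) :
    ∀ n : ℕ,
      A n ≤ ∑ m ∈ Finset.range (n + 1), c ^ m * (n.choose m : ℝ) * B (n - m) *
        ∑ ℓ ∈ Finset.range (m + 1), (ℓ.factorial : ℝ) * b ^ ℓ * stirling2 m ℓ := by
  set U := binomConv (fun m => c ^ m * fubiniPoly b m) B with hU_def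
  have hU_renewal : U = B + binomConv (fun k => if k = 0 then (0 : ℝ) else b * c ^ k) U :=
    binomConv_eq_add_binomConv_of_resolvent (pow_mul_fubiniPoly_eq_single_add_binomConv b c) B
  have hU : ∀ n, ∑ k ∈ Icc 1 n, (n.choose k : ℝ) * c ^ k * b * U (n - k) + B n ≤ U n := by
    intro n
    conv_rhs => rw [hU_renewal, Pi.add_apply, add_comm, binomConv_eq_sum_Icc (by simp)]
    refine le_of_eq (congrArg (· + B n) (sum_congr rfl fun k hk => ?_))
    rw [if_neg (by have := mem_Icc.1 hk; omega)]
    ring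
  intro n
  refine (le_of_le_sum_Icc_mul_add (fun n k => by positivity) hrec hU n).trans_eq ?_
  rw [hU_def, binomConv]
  simp only [fubiniPoly, stirling2_eq_stirlingSecond]
  exact sum_congr rfl fun m _ => by ring

/-- One-dimensional recursive Gronwall-type bound: if nonnegative sequences `A`, `B`
satisfy `A n ≤ ∑_{k=1}^n C(n,k) c^k b A_{n-k} + B n` for all `n`, then
`A n ≤ ∑_{m=0}^n c^m C(n,m) B_{n-m} ∑_{ℓ=0}^m ℓ! b^ℓ S(m,ℓ)`. -/
theorem recursive_bound_stirling (c b : ℝ) (hc : 0 < c) (hb : 0 ≤ b)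
    (A B : ℕ → ℝ) (hA : ∀ n, 0 ≤ A n) (hB : ∀ n, 0 ≤ B n)
    (hrec : ∀ n : ℕ,
      A n ≤ (∑ k ∈ Finset.Icc 1 n, (n.choose k : ℝ) * c ^ k * b * A (n - k)) + B n) :
    ∀ n : ℕ,
      A n ≤ ∑ m ∈ Finset.range (n + 1), c ^ m * (n.choose m : ℝ) * B (n - m) *
        ∑ ℓ ∈ Finset.range (m + 1), (ℓ.factorial : ℝ) * b ^ ℓ * stirling2 m ℓ :=
  recursive_bound_stirling_general c b hc hb A B hrec
end
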